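/- Let (X, 𝒜, μ) be a measure space, V = L²(μ; ℝ³), T : V → V a symmetric linear map (⟨T x, y⟩ = ⟨x, T y⟩ for all x, y ∈ V), and Q : V → V an orthogonal projection (Q ∘ Q = Q and ⟨Q f, g⟩ = ⟨f, Q g⟩ for all f, g ∈ V). Let A₀, A₁, u ∈ V, Δt ∈ ℝ, set B₀ = T A₀, B₁ = T A₁, H = Q((B₀ + B₁)/2), and suppose there is w ∈ V whose representative equals the pointwise cross product u(x) × H(x) for μ-a.e. x, and that A₁ − A₀ = Δt · Q w. Then the discrete helicity is conserved: ⟨A₁, B₁⟩ = ⟨A₀, B₀⟩. (This is the helicity conservation mechanism of the projection-based scheme in Theorem 4.1: the update A₁ − A₀ = −Δt E with E = −Q(u × H) and H the projection of the midpoint magnetic field leaves ⟨A, B⟩ invariant.) -/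

import Mathlib

open MeasureTheory

/-- The standard cross product on `ℝ³ = EuclideanSpace ℝ (Fin 3)`. -/
noncomputable def cross3 (a b : EuclideanSpace ℝ (Fin 3)) : EuclideanSpace ℝ (Fin 3) :=
  WithLp.toLp 2 (crossProduct a b)

/-!
For symmetric `T`, the helicity increment `⟪A₁, T A₁⟫ - ⟪A₀, T A₀⟫` equals
`⟪A₁ - A₀, B₀ + B₁⟫`. Moving the symmetric `Q` across turns this into `2 Δt ⟪w, H⟫`,
which vanishes because `u × H ⟂ H` pointwise.
-/

open scoped RealInnerProductSpace

theorem inner_cross3_self_right (a b : EuclideanSpace ℝ (Fin 3)) : ⟪cross3 a b, b⟫ = 0 := by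
  rw [cross3, EuclideanSpace.inner_eq_star_dotProduct, WithLp.ofLp_toLp, star_trivial]
  exact dot_cross_self a.ofLp b.ofLp

theorem MeasureTheory.L2.inner_eq_zero_of_ae_inner_eq_zero {X E : Type*} [MeasurableSpace X]
    {μ : Measure X} [NormedAddCommGroup E] [InnerProductSpace ℝ E] {f g : Lp E 2 μ}
    (h : ∀ᵐ x ∂μ, ⟪f x, g x⟫ = 0) : ⟪f, g⟫ = 0 := by
  rw [L2.inner_def, integral_congr_ae h, integral_zero]

theorem LinearMap.IsSymmetric.inner_map_self_sub_inner_map_self {V : Type*}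
    [NormedAddCommGroup V] [InnerProductSpace ℝ V] {T : V →ₗ[ℝ] V} (hT : T.IsSymmetric)
    (x y : V) : ⟪y, T y⟫ - ⟪x, T x⟫ = ⟪y - x, T x + T y⟫ := by
  have hxy : ⟪y, T x⟫ = ⟪x, T y⟫ := by rw [← hT, real_inner_comm]
  rw [inner_sub_left, inner_add_right, inner_add_right, hxy]
  ring

theorem projection_scheme_helicity_conservation_general
    {X : Type*} [MeasurableSpace X] (μ : Measure X)
    (T Q : Lp (EuclideanSpace ℝ (Fin 3)) 2 μ →ₗ[ℝ] Lp (EuclideanSpace ℝ (Fin 3)) 2 μ)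
    (hT : ∀ x y, inner (𝕜 := ℝ) (T x) y = inner (𝕜 := ℝ) x (T y))
    (hQsym : ∀ f g, inner (𝕜 := ℝ) (Q f) g = inner (𝕜 := ℝ) f (Q g))
    (A₀ A₁ u B₀ B₁ H w : Lp (EuclideanSpace ℝ (Fin 3)) 2 μ) (Δt : ℝ)
    (hB₀ : B₀ = T A₀) (hB₁ : B₁ = T A₁)
    (hH : H = Q ((2:ℝ)⁻¹ • (B₀ + B₁)))
    (hw : ∀ᵐ x ∂μ, w x = cross3 (u x) (H x))
    (hupd : A₁ - A₀ = Δt • Q w) :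
    inner (𝕜 := ℝ) A₁ B₁ = inner (𝕜 := ℝ) A₀ B₀ := by
  have hwH : ⟪w, H⟫ = 0 :=
    L2.inner_eq_zero_of_ae_inner_eq_zero <| hw.mono fun x hx => hx ▸ inner_cross3_self_right _ _
  have hQB : Q (B₀ + B₁) = (2 : ℝ) • H := by
    rw [hH, map_smul, smul_smul, mul_inv_cancel₀ two_ne_zero, one_smul]
  have hincr : ⟪A₁ - A₀, B₀ + B₁⟫ = 0 := by
    rw [hupd, real_inner_smul_left, hQsym, hQB, real_inner_smul_right, hwH, mul_zero, mul_zero]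
  have hsplit := (show T.IsSymmetric from hT).inner_map_self_sub_inner_map_self A₀ A₁
  rwa [← hB₀, ← hB₁, hincr, sub_eq_zero] at hsplit

/-- Helicity conservation mechanism of the projection-based scheme (Theorem 4.1):
with `T` symmetric, `Q` an orthogonal projection, `B₀ = T A₀`, `B₁ = T A₁`,
`H = Q((B₀ + B₁)/2)`, and the update `A₁ − A₀ = Δt • Q w` where `w` has a.e.
representative `u × H`, the discrete helicity `⟨A, B⟩` is conserved. -/
theorem projection_scheme_helicity_conservation
    {X : Type*} [MeasurableSpace X] (μ : Measure X)
    (T Q : Lp (EuclideanSpace ℝ (Fin 3)) 2 μ →ₗ[ℝ] Lp (EuclideanSpace ℝ (Fin 3)) 2 μ)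
    (hT : ∀ x y, inner (𝕜 := ℝ) (T x) y = inner (𝕜 := ℝ) x (T y))
    (hQproj : Q ∘ₗ Q = Q)
    (hQsym : ∀ f g, inner (𝕜 := ℝ) (Q f) g = inner (𝕜 := ℝ) f (Q g))
    (A₀ A₁ u B₀ B₁ H w : Lp (EuclideanSpace ℝ (Fin 3)) 2 μ) (Δt : ℝ)
    (hB₀ : B₀ = T A₀) (hB₁ : B₁ = T A₁)
    (hH : H = Q ((2:ℝ)⁻¹ • (B₀ + B₁)))
    (hw : ∀ᵐ x ∂μ, w x = cross3 (u x) (H x))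
    (hupd : A₁ - A₀ = Δt • Q w) :
    inner (𝕜 := ℝ) A₁ B₁ = inner (𝕜 := ℝ) A₀ B₀ :=
  projection_scheme_helicity_conservation_general μ T Q hT hQsym A₀ A₁ u B₀ B₁ H w Δt hB₀ hB₁ hH hw
    hupd
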